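/- Let T be a linear operator on M_{m×n}(S) that preserves the rank of every rank-1 matrix, and suppose there exist permutations ρ of {1,…,m} and σ of {1,…,n} and units α_{ij} of S with T(E_{ij}) = α_{ij} E_{ρ(i),σ(j)} for all (i,j) (or m = n and T(E_{ij}) = α_{ij} E_{σ(j),ρ(i)} for all (i,j)). Then T is a (U,V) operator: in the first case there exist invertible matrices U (m×m) and V (n×n) over S, namely a permutation matrix times an invertible diagonal matrix on each side, such that T(A) = U·A·V for every A ∈ M_{m×n}(S); in the second case m = n and there exist invertible matrices U, V with T(A) = U·Aᵗ·V for every A. -/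

import Mathlib

/-!
If `T (E i j) = α i j • E (ρ i) (σ j)`, then `T` acts entrywise:
`(T A) (ρ i) (σ j) = α i j * A i j`. The all-ones matrix on a rectangle `{i, i'} × {j, j'}`
has rank one, hence so has its image, and the vanishing of a 2×2 minor of that image gives
`α i j * α i' j' = α i j' * α i' j`. Thus `α i j = u i * v j` for units `u i`, `v j`, and
`T A = P_ρ⁻¹ D_u A D_v P_σ` with permutation matrices `P` and diagonal matrices `D`.
The transposed case is the same statement for `T` precomposed with transposition.
-/

open scoped Classical

/-- The semiring rank of an `m × n` matrix over `S`: the least positive `k` such that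
`A = B * C` for some `m × k` matrix `B` and `k × n` matrix `C`; the rank of `0` is `0`. -/
noncomputable def matRank {S : Type*} [CommSemiring S] {m n : ℕ}
    (A : Matrix (Fin m) (Fin n) S) : ℕ :=
  if A = 0 then 0
  else sInf {k : ℕ | 0 < k ∧
    ∃ (B : Matrix (Fin m) (Fin k) S) (C : Matrix (Fin k) (Fin n) S), A = B * C}

/-- The transpose of an `m × n` matrix, recast (via `m = n`) as an `m × n` matrix. -/
def trCast {S : Type*} {m n : ℕ} (h : m = n) (A : Matrix (Fin m) (Fin n) S) :
    Matrix (Fin m) (Fin n) S :=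
  Matrix.of fun i j => A (Fin.cast h.symm j) (Fin.cast h i)

/-- `T` is a `(U,V)` operator: either `T A = U * A * V` for some invertible `U`, `V`, or
`m = n` and `T A = U * Aᵗ * V` for some invertible `U`, `V`. -/
def IsUVOperator {S : Type*} [CommSemiring S] {m n : ℕ}
    (T : Matrix (Fin m) (Fin n) S →ₗ[S] Matrix (Fin m) (Fin n) S) : Prop :=
  (∃ (U : Matrix (Fin m) (Fin m) S) (V : Matrix (Fin n) (Fin n) S),
    IsUnit U ∧ IsUnit V ∧ ∀ A, T A = U * A * V) ∨
  (∃ h : m = n, ∃ (U : Matrix (Fin m) (Fin m) S) (V : Matrix (Fin n) (Fin n) S),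
    IsUnit U ∧ IsUnit V ∧ ∀ A, T A = U * trCast h A * V)

open Matrix Equiv

section matRank

variable {S : Type*} [CommSemiring S] {m n : ℕ}

theorem matRank_eq_one_iff {A : Matrix (Fin m) (Fin n) S} :
    matRank A = 1 ↔
      A ≠ 0 ∧ ∃ (B : Matrix (Fin m) (Fin 1) S) (C : Matrix (Fin 1) (Fin n) S), A = B * C := by
  unfold matRank
  split_ifs with hA
  · simp [hA]
  · set K := {k : ℕ | 0 < k ∧
      ∃ (B : Matrix (Fin m) (Fin k) S) (C : Matrix (Fin k) (Fin n) S), A = B * C}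
    refine ⟨fun h => ⟨hA, ?_⟩, fun ⟨_, hfac⟩ => ?_⟩
    · have hK := (Nat.sInf_mem (Nat.nonempty_of_sInf_eq_succ h)).2
      rwa [h] at hK
    · have h1K : 1 ∈ K := ⟨one_pos, hfac⟩
      exact le_antisymm (Nat.sInf_le h1K) (Nat.sInf_mem ⟨1, h1K⟩).1

theorem matRank_transpose_eq_one {A : Matrix (Fin m) (Fin n) S} (h : matRank A = 1) :
    matRank Aᵀ = 1 := by
  obtain ⟨hA, B, C, rfl⟩ := matRank_eq_one_iff.1 h
  exact matRank_eq_one_iff.2 ⟨mt transpose_eq_zero.1 hA, Cᵀ, Bᵀ, transpose_mul B C⟩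

theorem matRank_vecMulVec_eq_one {x : Fin m → S} {y : Fin n → S} (h : vecMulVec x y ≠ 0) :
    matRank (vecMulVec x y) = 1 :=
  matRank_eq_one_iff.2
    ⟨h, replicateCol (Fin 1) x, replicateRow (Fin 1) y, vecMulVec_eq (Fin 1) x y⟩

theorem mul_eq_mul_of_matRank_eq_one {A : Matrix (Fin m) (Fin n) S} (h : matRank A = 1)
    (p p' : Fin m) (q q' : Fin n) : A p q * A p' q' = A p q' * A p' q := by
  obtain ⟨-, B, C, rfl⟩ := matRank_eq_one_iff.1 h
  simp only [mul_apply, Fin.sum_univ_one]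
  ring

end matRank

theorem exists_isUnit_mul_of_mul_eq_mul {M m n : Type*} [CommMonoid M] {α : m → n → M}
    (hα : ∀ i j, IsUnit (α i j)) (hrel : ∀ i i' j j', α i j * α i' j' = α i j' * α i' j) :
    ∃ (u : m → M) (v : n → M), (∀ i, IsUnit (u i)) ∧ (∀ j, IsUnit (v j)) ∧
      ∀ i j, α i j = u i * v j := by
  by_cases h : Nonempty (m × n)
  · obtain ⟨i₀, j₀⟩ := h
    refine ⟨fun i => α i j₀ * ↑(hα i₀ j₀).unit⁻¹, fun j => α i₀ j,
      fun i => (hα i j₀).mul (Units.isUnit _), fun j => hα i₀ j, fun i j => ?_⟩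
    calc α i j = ↑(hα i₀ j₀).unit⁻¹ * (α i₀ j₀ * α i j) := by
          rw [← mul_assoc, IsUnit.val_inv_mul, one_mul]
      _ = α i j₀ * ↑(hα i₀ j₀).unit⁻¹ * α i₀ j := by rw [hrel i₀ i j₀ j]; ac_rfl
  · exact ⟨1, 1, fun _ => isUnit_one, fun _ => isUnit_one, fun i j => (h ⟨(i, j)⟩).elim⟩

section single

variable {S : Type*} [CommSemiring S]

theorem apply_apply_of_map_single {m n m' n' : Type*} [Fintype m] [Fintype n]
    [DecidableEq m] [DecidableEq n] [DecidableEq m'] [DecidableEq n']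
    (T : Matrix m n S →ₗ[S] Matrix m' n' S) {ρ : m → m'} {σ : n → n'}
    (hρ : Function.Injective ρ) (hσ : Function.Injective σ) (α : m → n → S)
    (hT : ∀ i j, T (single i j 1) = α i j • single (ρ i) (σ j) 1)
    (A : Matrix m n S) (i : m) (j : n) : T A (ρ i) (σ j) = α i j * A i j := by
  induction A using Matrix.induction_on' with
  | h_zero => simp
  | h_add A B hA hB => simp [hA, hB, mul_add]
  | h_std_basis p q x =>
    rw [← mul_one x, ← smul_eq_mul, ← smul_single, map_smul, hT]
    by_cases hp : p = i <;> by_cases hq : q = j <;>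
      simp [hρ.eq_iff, hσ.eq_iff, hp, hq, mul_comm]

theorem isUnit_permMatrix {m : Type*} [Fintype m] [DecidableEq m] (ρ : Perm m) :
    IsUnit (ρ.permMatrix S) := by
  simpa using (Group.isUnit ρ⁻¹).map (permMatrixHom (n := m) (R := S))

theorem isUnit_diagonal_of_isUnit {m : Type*} [Fintype m] [DecidableEq m] {w : m → S}
    (hw : ∀ i, IsUnit (w i)) : IsUnit (diagonal w) :=
  (Pi.isUnit_iff.2 hw).map (diagonalRingHom m S)

variable {m n : Type*} [Fintype m] [Fintype n] [DecidableEq m] [DecidableEq n]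

theorem exists_isUnit_mul_mul_of_map_single (T : Matrix m n S →ₗ[S] Matrix m n S)
    (ρ : Perm m) (σ : Perm n) {u : m → S} {v : n → S} (hu : ∀ i, IsUnit (u i))
    (hv : ∀ j, IsUnit (v j))
    (hT : ∀ i j, T (single i j 1) = (u i * v j) • single (ρ i) (σ j) 1) :
    ∃ (U : Matrix m m S) (V : Matrix n n S),
      IsUnit U ∧ IsUnit V ∧ ∀ A, T A = U * A * V := by
  refine ⟨ρ⁻¹.permMatrix S * diagonal u, diagonal v * σ.permMatrix S,
    (isUnit_permMatrix _).mul (isUnit_diagonal_of_isUnit hu),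
    (isUnit_diagonal_of_isUnit hv).mul (isUnit_permMatrix _), fun A => ?_⟩
  have hUAV : ρ⁻¹.permMatrix S * diagonal u * A * (diagonal v * σ.permMatrix S) =
      ρ⁻¹.permMatrix S * (diagonal u * A * diagonal v) * σ.permMatrix S := by
    simp only [Matrix.mul_assoc]
  ext p q
  obtain ⟨i, rfl⟩ := ρ.surjective p
  obtain ⟨j, rfl⟩ := σ.surjective q
  rw [hUAV, apply_apply_of_map_single T ρ.injective σ.injective _ hT]
  simp only [PEquiv.toMatrix_toPEquiv_mul, PEquiv.mul_toMatrix_toPEquiv, Perm.coe_inv,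
    submatrix_apply, id_eq, symm_apply_apply, mul_diagonal, diagonal_mul]
  ring

end single

section preserver

variable {S : Type*} [CommSemiring S] {m n : ℕ}

theorem mul_eq_mul_of_preserves_matRank_one
    (T : Matrix (Fin m) (Fin n) S →ₗ[S] Matrix (Fin m) (Fin n) S)
    (h1 : ∀ A, matRank A = 1 → matRank (T A) = 1) (ρ : Perm (Fin m)) (σ : Perm (Fin n))
    (α : Fin m → Fin n → S)
    (hT : ∀ i j, T (single i j 1) = α i j • single (ρ i) (σ j) 1)
    (i i' : Fin m) (j j' : Fin n) : α i j * α i' j' = α i j' * α i' j := by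
  rcases subsingleton_or_nontrivial S with hS | hS
  · exact Subsingleton.elim _ _
  let x : Fin m → S := fun p => if p = i ∨ p = i' then 1 else 0
  let y : Fin n → S := fun q => if q = j ∨ q = j' then 1 else 0
  have hM : matRank (vecMulVec x y) = 1 :=
    matRank_vecMulVec_eq_one fun h => by simpa [x, y, vecMulVec_apply] using congr_fun₂ h i j
  simpa [apply_apply_of_map_single T ρ.injective σ.injective α hT, vecMulVec_apply, x, y] using
    mul_eq_mul_of_matRank_eq_one (h1 _ hM) (ρ i) (ρ i') (σ j) (σ j')

theorem exists_isUnit_mul_mul_of_preserves_matRank_one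
    (T : Matrix (Fin m) (Fin n) S →ₗ[S] Matrix (Fin m) (Fin n) S)
    (h1 : ∀ A, matRank A = 1 → matRank (T A) = 1) (ρ : Perm (Fin m)) (σ : Perm (Fin n))
    {α : Fin m → Fin n → S} (hα : ∀ i j, IsUnit (α i j))
    (hT : ∀ i j, T (single i j 1) = α i j • single (ρ i) (σ j) 1) :
    ∃ (U : Matrix (Fin m) (Fin m) S) (V : Matrix (Fin n) (Fin n) S),
      IsUnit U ∧ IsUnit V ∧ ∀ A, T A = U * A * V := by
  obtain ⟨u, v, hu, hv, huv⟩ :=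
    exists_isUnit_mul_of_mul_eq_mul hα (mul_eq_mul_of_preserves_matRank_one T h1 ρ σ α hT)
  exact exists_isUnit_mul_mul_of_map_single T ρ σ hu hv fun i j => by rw [hT, huv]

end preserver

theorem stmt11_general {S : Type*} [CommSemiring S]
    {m n : ℕ}
    (T : Matrix (Fin m) (Fin n) S →ₗ[S] Matrix (Fin m) (Fin n) S)
    (h1 : ∀ A : Matrix (Fin m) (Fin n) S, matRank A = 1 → matRank (T A) = 1)
    (ρ : Equiv.Perm (Fin m)) (σ : Equiv.Perm (Fin n)) (α : Fin m → Fin n → S)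
    (hα : ∀ i j, IsUnit (α i j))
    (hform : (∀ (i : Fin m) (j : Fin n),
        T (Matrix.single i j 1) = α i j • Matrix.single (ρ i) (σ j) 1) ∨
      (∃ h : m = n, ∀ (i : Fin m) (j : Fin n),
        T (Matrix.single i j 1) =
          α i j • Matrix.single (Fin.cast h.symm (σ j)) (Fin.cast h (ρ i)) 1)) :
    IsUVOperator T := by
  rcases hform with hT | ⟨rfl, hT⟩
  · exact Or.inl (exists_isUnit_mul_mul_of_preserves_matRank_one T h1 ρ σ hα hT)
  · let T' := T ∘ₗ (transposeLinearEquiv (Fin m) (Fin m) S S).toLinearMap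
    obtain ⟨U, V, hU, hV, hUV⟩ := exists_isUnit_mul_mul_of_preserves_matRank_one T'
      (fun A hA => h1 _ (matRank_transpose_eq_one hA)) σ ρ (fun i j => hα j i)
      (fun i j => by simpa [T', transpose_single] using hT j i)
    exact Or.inr ⟨rfl, U, V, hU, hV, fun A => by
      show T A = U * Aᵀ * V
      simpa [T'] using hUV Aᵀ⟩

theorem stmt11 {S : Type*} [CommSemiring S]
    (haddidem : ∀ a : S, a + a = a)
    (hmc : ∀ a b c : S, a ≠ 0 → b * a = c * a → b = c)
    (haui : ∀ a b : S, IsUnit (a + b) → IsUnit a ∨ IsUnit b)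
    {m n : ℕ}
    (T : Matrix (Fin m) (Fin n) S →ₗ[S] Matrix (Fin m) (Fin n) S)
    (h1 : ∀ A : Matrix (Fin m) (Fin n) S, matRank A = 1 → matRank (T A) = 1)
    (ρ : Equiv.Perm (Fin m)) (σ : Equiv.Perm (Fin n)) (α : Fin m → Fin n → S)
    (hα : ∀ i j, IsUnit (α i j))
    (hform : (∀ (i : Fin m) (j : Fin n),
        T (Matrix.single i j 1) = α i j • Matrix.single (ρ i) (σ j) 1) ∨
      (∃ h : m = n, ∀ (i : Fin m) (j : Fin n),
        T (Matrix.single i j 1) =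
          α i j • Matrix.single (Fin.cast h.symm (σ j)) (Fin.cast h (ρ i)) 1)) :
    IsUVOperator T :=
  stmt11_general T h1 ρ σ α hα hform
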